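/- Let S be a semicopula and suppose that for every measurable space (X,𝒜), every capacity μ on 𝒜, every measurable f : X → [0,1], and every a ∈ [0,1] with f + a valued in [0,1], the translation invariance I(μ, f+a) = I(μ,f) + a holds, where I(μ,f) = sup_{t∈[0,1]} S(t, μ({f ≥ t})). Then S is the Łukasiewicz t-norm: S(x,y) = max(x+y-1, 0) for all x,y ∈ [0,1]. -/

import Mathlib

open Set

structure IsSemicopula (S : ℝ → ℝ → ℝ) : Prop where
  mem : ∀ x ∈ Icc (0:ℝ) 1, ∀ y ∈ Icc (0:ℝ) 1, S x y ∈ Icc (0:ℝ) 1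
  mono_left : ∀ y ∈ Icc (0:ℝ) 1, ∀ x₁ ∈ Icc (0:ℝ) 1, ∀ x₂ ∈ Icc (0:ℝ) 1,
    x₁ ≤ x₂ → S x₁ y ≤ S x₂ y
  mono_right : ∀ x ∈ Icc (0:ℝ) 1, ∀ y₁ ∈ Icc (0:ℝ) 1, ∀ y₂ ∈ Icc (0:ℝ) 1,
    y₁ ≤ y₂ → S x y₁ ≤ S x y₂
  neutral_right : ∀ x ∈ Icc (0:ℝ) 1, S x 1 = x
  neutral_left : ∀ x ∈ Icc (0:ℝ) 1, S 1 x = x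

structure IsCapacity {X : Type*} [MeasurableSpace X] (μ : Set X → ℝ) : Prop where
  mono : ∀ A B : Set X, A ⊆ B → μ A ≤ μ B
  empty : μ ∅ = 0
  univ : μ Set.univ = 1
  mem : ∀ A : Set X, μ A ∈ Icc (0:ℝ) 1

/-- The smallest semicopula-based integral. -/
noncomputable def scInt {X : Type*} [MeasurableSpace X]
    (S : ℝ → ℝ → ℝ) (μ : Set X → ℝ) (f : X → ℝ) : ℝ :=
  ⨆ t : Icc (0:ℝ) 1, S t (μ {x | (t:ℝ) ≤ f x})

/-!
Translation invariance is tested on the two-point space `Bool` with the capacity that gives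
weight `y` to `{true}` and `0` to `{false}`, and the function `f = x · 1_{true}`. For
`0 ≤ c ≤ 1 - x` one computes `I(μ, f + c) = max c (S (x + c) y)`; for `c = 0` this is `S x y`
and for `c = 1 - x` it is `max (1 - x) y`. Invariance then forces
`S x y = max (1 - x) y - (1 - x) = max (x + y - 1) 0`.
-/

namespace IsSemicopula

variable {S : ℝ → ℝ → ℝ} {x y : ℝ}

theorem nonneg (hS : IsSemicopula S) (hx : x ∈ Icc (0:ℝ) 1) (hy : y ∈ Icc (0:ℝ) 1) :
    0 ≤ S x y :=
  (hS.mem x hx y hy).1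

theorem le_left (hS : IsSemicopula S) (hx : x ∈ Icc (0:ℝ) 1) (hy : y ∈ Icc (0:ℝ) 1) :
    S x y ≤ x :=
  (hS.mono_right x hx y hy 1 (by simp) hy.2).trans_eq (hS.neutral_right x hx)

theorem le_right (hS : IsSemicopula S) (hx : x ∈ Icc (0:ℝ) 1) (hy : y ∈ Icc (0:ℝ) 1) :
    S x y ≤ y :=
  (hS.mono_left y hy x hx 1 (by simp) hx.2).trans_eq (hS.neutral_left y hy)

end IsSemicopula

section scInt

variable {X : Type*} [MeasurableSpace X] {S : ℝ → ℝ → ℝ} {μ : Set X → ℝ} {f : X → ℝ}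

theorem scInt_le {c : ℝ} (h : ∀ t ∈ Icc (0:ℝ) 1, S t (μ {x | t ≤ f x}) ≤ c) :
    scInt S μ f ≤ c :=
  haveI : Nonempty (Icc (0:ℝ) 1) := ⟨⟨0, by simp⟩⟩
  ciSup_le fun t => h t t.2

theorem le_scInt (hS : IsSemicopula S) (hμ : IsCapacity μ) {t : ℝ} (ht : t ∈ Icc (0:ℝ) 1) :
    S t (μ {x | t ≤ f x}) ≤ scInt S μ f := by
  refine le_ciSup (f := fun t : Icc (0:ℝ) 1 => S t (μ {x | (t:ℝ) ≤ f x})) ⟨1, ?_⟩ ⟨t, ht⟩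
  rintro _ ⟨s, rfl⟩
  exact (hS.mem s s.2 _ (hμ.mem _)).2

end scInt

open Classical in
noncomputable def boolCapacity (y : ℝ) (A : Set Bool) : ℝ :=
  if true ∈ A then (if false ∈ A then 1 else y) else 0

theorem isCapacity_boolCapacity {y : ℝ} (hy : y ∈ Icc (0:ℝ) 1) :
    IsCapacity (boolCapacity y) where
  mono A B hAB := by
    unfold boolCapacity
    split_ifs <;>
      first
        | linarith [hy.1, hy.2]
        | exact absurd (hAB ‹true ∈ A›) ‹true ∉ B›
        | exact absurd (hAB ‹false ∈ A›) ‹false ∉ B›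
  empty := by simp [boolCapacity]
  univ := by simp [boolCapacity]
  mem A := by
    unfold boolCapacity
    split_ifs <;> simp [hy]

theorem boolCapacity_le {y : ℝ} {A : Set Bool} (hy : 0 ≤ y) (hA : false ∉ A) :
    boolCapacity y A ≤ y := by
  unfold boolCapacity
  split_ifs <;> trivial

theorem le_boolCapacity {y : ℝ} {A : Set Bool} (hy : y ≤ 1) (hA : true ∈ A) :
    y ≤ boolCapacity y A := by
  unfold boolCapacity
  split_ifs <;> trivial

theorem scInt_boolCapacity_step {S : ℝ → ℝ → ℝ} (hS : IsSemicopula S) {x y c : ℝ}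
    (hx : 0 ≤ x) (hy : y ∈ Icc (0:ℝ) 1) (hc : 0 ≤ c) (hxc : x + c ≤ 1) :
    scInt S (boolCapacity y) (fun z => (if z then x else 0) + c) = max c (S (x + c) y) := by
  have hμ := isCapacity_boolCapacity hy
  have hc1 : c ∈ Icc (0:ℝ) 1 := ⟨hc, by linarith⟩
  have hxc1 : x + c ∈ Icc (0:ℝ) 1 := ⟨by linarith, hxc⟩
  apply le_antisymm
  · refine scInt_le fun t ht => ?_
    set L := {z : Bool | t ≤ (if z then x else 0) + c}
    by_cases htc : t ≤ c
    · exact le_max_of_le_left ((hS.le_left ht (hμ.mem L)).trans htc)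
    by_cases htxc : t ≤ x + c
    · have hL : false ∉ L := by simpa [L] using htc
      calc S t (boolCapacity y L)
          ≤ S t y := hS.mono_right t ht _ (hμ.mem L) y hy (boolCapacity_le hy.1 hL)
        _ ≤ S (x + c) y := hS.mono_left y hy t ht _ hxc1 htxc
        _ ≤ _ := le_max_right _ _
    · have hL : L = ∅ := by
        ext z; cases z <;> simp [L] <;> linarith
      rw [hL, hμ.empty]
      exact le_max_of_le_left ((hS.le_right ht (by simp)).trans hc)
  · apply max_le
    · have hL : {z : Bool | c ≤ (if z then x else 0) + c} = univ := by
        ext z; cases z <;> simp [hx]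
      have hc_le := le_scInt (f := fun z => (if z then x else 0) + c) hS hμ hc1
      rwa [hL, hμ.univ, hS.neutral_right c hc1] at hc_le
    · have hL : true ∈ {z : Bool | x + c ≤ (if z then x else 0) + c} := by simp
      exact (hS.mono_right _ hxc1 y hy _ (hμ.mem _) (le_boolCapacity hy.2 hL)).trans
        (le_scInt hS hμ hxc1)

theorem hutnik_solution (S : ℝ → ℝ → ℝ) (hS : IsSemicopula S)
    (h : ∀ (X : Type) (mX : MeasurableSpace X) (μ : Set X → ℝ), IsCapacity μ →
      ∀ f : X → ℝ, Measurable f → (∀ x, f x ∈ Icc (0:ℝ) 1) →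
      ∀ a ∈ Icc (0:ℝ) 1, (∀ x, f x + a ≤ 1) →
        scInt S μ (fun x => f x + a) = scInt S μ f + a) :
    ∀ x ∈ Icc (0:ℝ) 1, ∀ y ∈ Icc (0:ℝ) 1, S x y = max (x + y - 1) 0 := by
  intro x hx y hy
  have hshift : (1 - x) ∈ Icc (0:ℝ) 1 := ⟨by linarith [hx.2], by linarith [hx.1]⟩
  have hinv := h Bool inferInstance (boolCapacity y) (isCapacity_boolCapacity hy)
    (fun z => if z then x else 0) (measurable_of_countable _)
    (fun z => by split_ifs <;> simp [hx]) (1 - x) hshift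
    (fun z => by split_ifs <;> linarith [hx.1])
  have hunshifted : scInt S (boolCapacity y) (fun z => if z then x else 0) = S x y := by
    simpa [max_eq_right (hS.nonneg hx hy)] using
      scInt_boolCapacity_step hS hx.1 hy le_rfl (by linarith [hx.2])
  rw [hunshifted, scInt_boolCapacity_step hS hx.1 hy hshift.1 (by linarith),
    add_sub_cancel, hS.neutral_left y hy] at hinv
  rw [← sub_eq_iff_eq_add.mpr hinv, ← max_sub_sub_right, sub_self, max_comm]
  ring_nf
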